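/- Define H² : C(𝕀) × [0,1] → C(𝕀) by H²(f,t)(x) = max{f(x), (M(f) − m(f))·t + m(f)}, where M(f) = max_{x∈𝕀} f(x) and m(f) = min_{x∈𝕀} f(x). Then H² is continuous and satisfies: (1) H²_0(f) = f for every f ∈ C(𝕀); (2) for every t ∈ (0,1] and f ∈ C(𝕀), h_top(H²_t(f)) ≤ h_top(f), and if f is piecewise monotone then so is H²_t(f); (3) H²_1(f) is a constant map (equal to M(f) everywhere) for every f ∈ C(𝕀). -/

import Mathlib

open unitInterval

/-- The topological entropy of a continuous self-map of the unit interval. -/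
noncomputable def htop (f : C(I, I)) : EReal :=
  Dynamics.coverEntropy ⇑f Set.univ

/-- A map of the unit interval is piecewise monotone if the interval can be cut into finitely
many subintervals on each of which the map is monotone. -/
def PiecewiseMonotone (f : I → I) : Prop :=
  ∃ (n : ℕ) (t : Fin (n + 1) → I), t 0 = 0 ∧ t (Fin.last n) = 1 ∧ StrictMono t ∧
    ∀ i : Fin n, MonotoneOn f (Set.Icc (t i.castSucc) (t i.succ)) ∨
      AntitoneOn f (Set.Icc (t i.castSucc) (t i.succ))

/-- The maximum value of `f ∈ C(I)`. -/
noncomputable def Mval (f : C(I, I)) : ℝ :=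
  sSup (Set.range fun x : I => (f x : ℝ))

/-- The minimum value of `f ∈ C(I)`. -/
noncomputable def mval (f : C(I, I)) : ℝ :=
  sInf (Set.range fun x : I => (f x : ℝ))



open Set Uniformity UniformSpace Filter Dynamics
open scoped SetRel

namespace TruncAux

variable {X : Type*} {T S : X → X} {c : X}

/-- first hitting time of `c` (capped at `n`). -/
noncomputable def rho (S : X → X) (c : X) (n : ℕ) (x : X) : ℕ :=
  sInf ({k : ℕ | 0 < k ∧ S^[k] x = c} ∪ {n})

lemma rho_le (S : X → X) (c : X) (n : ℕ) (x : X) : rho S c n x ≤ n :=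
  Nat.sInf_le (Or.inr rfl)

lemma rho_mem (S : X → X) (c : X) (n : ℕ) (x : X) :
    rho S c n x ∈ ({k : ℕ | 0 < k ∧ S^[k] x = c} ∪ {n}) :=
  Nat.sInf_mem ⟨n, Or.inr rfl⟩

lemma iterate_eq_c {n : ℕ} {x : X} (h : rho S c n x < n) : S^[rho S c n x] x = c := by
  rcases rho_mem S c n x with h' | h'
  · exact h'.2
  · exact absurd h' (by simpa using h.ne)

lemma iterate_eq_of_lt_rho (hP : ∀ x, S x = T x ∨ S x = c) {n : ℕ} {x : X} :
    ∀ k, k < rho S c n x → S^[k] x = T^[k] x := by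
  intro k
  induction k with
  | zero => intro _; rfl
  | succ k ih =>
    intro hk
    have hk' : k < rho S c n x := (Nat.lt_succ_self k).trans hk
    rw [Function.iterate_succ_apply', Function.iterate_succ_apply', ← ih hk']
    rcases hP (S^[k] x) with h | h
    · rw [h, ih hk']
    · exfalso
      have : rho S c n x ≤ k + 1 := Nat.sInf_le (Or.inl ⟨k.succ_pos, by
        rw [Function.iterate_succ_apply', h]⟩)
      exact absurd hk (not_lt.2 this)

lemma iterate_eq_of_rho_le {n : ℕ} {x : X} (hρ : rho S c n x < n) {k : ℕ}
    (hk : rho S c n x ≤ k) : S^[k] x = S^[k - rho S c n x] c := by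
  conv_lhs => rw [← Nat.sub_add_cancel hk]
  rw [Function.iterate_add_apply, iterate_eq_c hρ]

lemma netMaxcard_le (hP : ∀ x, S x = T x ∨ S x = c) {U : Set (X × X)}
    (U_rfl : SetRel.id ⊆ U) (U_symm : SetRel.IsSymm U) (n : ℕ) :
    netMaxcard S univ (U ○ U) n ≤ (n + 1) * netMaxcard T univ U n := by
  classical
  refine iSup₂_le fun s hs => ?_
  -- split `s` according to the value of `rho`
  have hcard : s.card = ∑ j ∈ Finset.range (n + 1), (s.filter fun x => rho S c n x = j).card := by
    apply Finset.card_eq_sum_card_fiberwise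
    intro x _
    simpa using Nat.lt_succ_of_le (rho_le S c n x)
  have hnet : ∀ j, IsDynNetIn T univ U n ↑(s.filter fun x => rho S c n x = j) := by
    intro j
    refine ⟨subset_univ _, fun x hx y hy hxy => ?_⟩
    simp only [Finset.coe_filter, mem_setOf_eq] at hx hy
    rw [Function.onFun]
    by_contra hdisj
    rcases not_disjoint_iff.1 hdisj with ⟨z, hzx, hzy⟩
    rw [mem_ball_dynEntourage] at hzx hzy
    -- derive that S-orbits of x,y are (U ○ U)-close
    have key : ∀ k < n, (S^[k] x, S^[k] y) ∈ U ○ U := by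
      intro k hk
      rcases lt_or_ge k j with h | h
      · have h1 : (T^[k] x, T^[k] z) ∈ U := hzx k hk
        have h2 : (T^[k] y, T^[k] z) ∈ U := hzy k hk
        have hTk : (T^[k] x, T^[k] y) ∈ U ○ U := ⟨T^[k] z, h1, SetRel.symm U h2⟩
        rw [iterate_eq_of_lt_rho hP k (hx.2 ▸ h), iterate_eq_of_lt_rho hP k (hy.2 ▸ h)]
        exact hTk
      · have hρx : rho S c n x < n := lt_of_le_of_lt (hx.2 ▸ h : rho S c n x ≤ k) hk
        have hρy : rho S c n y < n := lt_of_le_of_lt (hy.2 ▸ h : rho S c n y ≤ k) hk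
        have heq : S^[k] x = S^[k] y := by
          rw [iterate_eq_of_rho_le hρx (hx.2 ▸ h), iterate_eq_of_rho_le hρy (hy.2 ▸ h),
            hx.2, hy.2]
        rw [heq]
        exact ⟨S^[k] y, U_rfl rfl, U_rfl rfl⟩
    have hy_mem : y ∈ ball x (dynEntourage S (U ○ U) n) :=
      mem_ball_dynEntourage.2 key
    have hy_mem' : y ∈ ball y (dynEntourage S (U ○ U) n) :=
      mem_ball_dynEntourage.2 fun k _ => ⟨S^[k] y, U_rfl rfl, U_rfl rfl⟩
    exact hxy (hs.2.elim_set (Finset.mem_coe.2 hx.1) (Finset.mem_coe.2 hy.1) y hy_mem hy_mem')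
  -- now sum up the cardinalities
  calc (s.card : ℕ∞)
      = ∑ j ∈ Finset.range (n + 1), ((s.filter fun x => rho S c n x = j).card : ℕ∞) := by
        rw [← Nat.cast_sum, ← hcard]
    _ ≤ ∑ _j ∈ Finset.range (n + 1), netMaxcard T univ U n :=
        Finset.sum_le_sum fun j _ => (hnet j).card_le_netMaxcard
    _ = (n + 1) * netMaxcard T univ U n := by
        rw [Finset.sum_const, Finset.card_range, nsmul_eq_mul]; norm_cast

end TruncAux

namespace TruncAux

open ENNReal EReal Filter

variable {X : Type*} {T S : X → X} {c : X}

lemma tendsto_log_succ_div :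
    Tendsto (fun n : ℕ => ENNReal.log (((n : ℕ∞) + 1 : ℕ∞) : ℝ≥0∞) / (n : EReal)) atTop
      (nhds 0) := by
  have hreal : Tendsto (fun n : ℕ => Real.log ((n : ℝ) + 1) / (n : ℝ)) atTop (nhds 0) := by
    have hbase : Tendsto (fun x : ℝ => Real.log x / x) atTop (nhds 0) :=
      Real.isLittleO_log_id_atTop.tendsto_div_nhds_zero
    have hcomp : Tendsto (fun n : ℕ => Real.log ((n : ℝ) + 1) / ((n : ℝ) + 1)) atTop (nhds 0) :=
      hbase.comp (tendsto_atTop_add_const_right atTop 1 tendsto_natCast_atTop_atTop)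
    have h2 : Tendsto (fun n : ℕ => 2 * (Real.log ((n : ℝ) + 1) / ((n : ℝ) + 1))) atTop
        (nhds 0) := by simpa using hcomp.const_mul 2
    apply squeeze_zero' ?_ ?_ h2
    · filter_upwards [eventually_ge_atTop 1] with n hn
      have h0 : (0:ℝ) ≤ n := by positivity
      exact div_nonneg (Real.log_nonneg (by linarith)) h0
    · filter_upwards [eventually_ge_atTop 1] with n hn
      have hn0 : (0:ℝ) < n := by exact_mod_cast hn
      have hL : 0 ≤ Real.log ((n : ℝ) + 1) := Real.log_nonneg (by linarith)
      calc Real.log ((n : ℝ) + 1) / n = Real.log ((n : ℝ) + 1) * (1 / n) := by ring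
        _ ≤ Real.log ((n : ℝ) + 1) * (2 / ((n : ℝ) + 1)) := by
            apply mul_le_mul_of_nonneg_left _ hL
            have hn1 : (1:ℝ) ≤ n := by exact_mod_cast hn
            rw [div_le_div_iff₀ hn0 (by linarith)]
            linarith
        _ = 2 * (Real.log ((n : ℝ) + 1) / ((n : ℝ) + 1)) := by ring
  apply Tendsto.congr' ?_ ((EReal.tendsto_coe).2 hreal)
  filter_upwards [eventually_ge_atTop 1] with n hn
  have h1 : (((n : ℕ∞) + 1 : ℕ∞) : ℝ≥0∞) = ENNReal.ofReal ((n : ℝ) + 1) := by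
    rw [← Nat.cast_one (R := ℕ∞), ← Nat.cast_add, ENat.toENNReal_coe]
    rw [← ENNReal.ofReal_natCast]
    norm_num
  rw [h1, ENNReal.log_ofReal_of_pos (by positivity), EReal.coe_div, EReal.coe_coe_eq_natCast]

lemma netEntropyEntourage_le [Nonempty X] (hP : ∀ x, S x = T x ∨ S x = c) {U : Set (X × X)}
    (U_rfl : SetRel.id ⊆ U) (U_symm : SetRel.IsSymm U) :
    netEntropyEntourage S univ (U ○ U) ≤ netEntropyEntourage T univ U := by
  set u : ℕ → EReal := fun n => ENNReal.log (((n : ℕ∞) + 1 : ℕ∞) : ℝ≥0∞) / (n : EReal) with hu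
  set v : ℕ → EReal := fun n => ENNReal.log (netMaxcard T univ U n) / (n : EReal) with hv
  have huniv : (univ : Set X).Nonempty := univ_nonempty
  have step : ∀ n : ℕ, ENNReal.log (netMaxcard S univ (U ○ U) n) / (n : EReal) ≤ u n + v n := by
    intro n
    have hb : netMaxcard S univ (U ○ U) n ≤ ((n : ℕ∞) + 1) * netMaxcard T univ U n := by
      exact_mod_cast netMaxcard_le hP U_rfl U_symm n
    have hlog : ENNReal.log (netMaxcard S univ (U ○ U) n) ≤
        ENNReal.log (((n : ℕ∞) + 1 : ℕ∞) : ℝ≥0∞) + ENNReal.log (netMaxcard T univ U n) := by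
      rw [← ENNReal.log_mul_add]
      apply ENNReal.log_monotone
      rw [← ENat.toENNReal_mul]
      exact_mod_cast ENat.toENNReal_mono hb
    calc ENNReal.log (netMaxcard S univ (U ○ U) n) / (n : EReal)
        ≤ (ENNReal.log (((n : ℕ∞) + 1 : ℕ∞) : ℝ≥0∞) + ENNReal.log (netMaxcard T univ U n)) /
            (n : EReal) := monotone_div_right_of_nonneg (Nat.cast_nonneg' n) hlog
      _ = u n + v n := by
          rw [hu, hv]
          apply EReal.div_right_distrib_of_nonneg
          · exact ENNReal.zero_le_log_iff.2 (by exact_mod_cast le_add_self)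
          · exact ENNReal.zero_le_log_iff.2 (by exact_mod_cast (one_le_netMaxcard_iff T univ U n).2 huniv)
  have hlimu : atTop.limsup u = 0 := (tendsto_log_succ_div).limsup_eq
  calc netEntropyEntourage S univ (U ○ U)
      ≤ atTop.limsup (u + v) := limsup_le_limsup (Eventually.of_forall step)
    _ ≤ atTop.limsup u + atTop.limsup v := by
        apply EReal.limsup_add_le
        · exact Or.inl (by rw [hlimu]; exact EReal.zero_ne_bot)
        · exact Or.inl (by rw [hlimu]; exact EReal.zero_ne_top)
    _ = netEntropyEntourage T univ U := by rw [hlimu, zero_add]; rfl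

lemma coverEntropy_le [UniformSpace X] [Nonempty X] (hP : ∀ x, S x = T x ∨ S x = c) :
    coverEntropy S univ ≤ coverEntropy T univ := by
  refine iSup₂_le fun U U_uni => ?_
  rcases comp_symm_mem_uniformity_sets U_uni with ⟨V, V_uni, V_symm, V_U⟩
  rcases comp_symm_mem_uniformity_sets V_uni with ⟨W, W_uni, W_symm, W_V⟩
  calc coverEntropyEntourage S univ U
      ≤ coverEntropyEntourage S univ (V ○ V) := coverEntropyEntourage_antitone S univ V_U
    _ ≤ netEntropyEntourage S univ V :=
        by have := isRefl_of_mem_uniformity V_uni; exact coverEntropyEntourage_le_netEntropyEntourage S univ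
    _ ≤ netEntropyEntourage S univ (W ○ W) := netEntropyEntourage_antitone S univ W_V
    _ ≤ netEntropyEntourage T univ W :=
        netEntropyEntourage_le hP (refl_le_uniformity W_uni) W_symm
    _ ≤ coverEntropy T univ := netEntropyEntourage_le_coverEntropy T univ W_uni

end TruncAux


namespace HAux

lemma rng_ne (f : C(I, I)) : (Set.range fun x : I => (f x : ℝ)).Nonempty := ⟨f 0, 0, rfl⟩

lemma rng_bddA (f : C(I, I)) : BddAbove (Set.range fun x : I => (f x : ℝ)) :=
  ⟨1, fun y ⟨x, hx⟩ => hx ▸ (f x).2.2⟩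

lemma rng_bddB (f : C(I, I)) : BddBelow (Set.range fun x : I => (f x : ℝ)) :=
  ⟨0, fun y ⟨x, hx⟩ => hx ▸ (f x).2.1⟩

lemma le_Mval (f : C(I, I)) (x : I) : (f x : ℝ) ≤ Mval f := le_csSup (rng_bddA f) ⟨x, rfl⟩

lemma mval_le (f : C(I, I)) (x : I) : mval f ≤ (f x : ℝ) := csInf_le (rng_bddB f) ⟨x, rfl⟩

lemma Mval_le_one (f : C(I, I)) : Mval f ≤ 1 :=
  csSup_le (rng_ne f) fun y ⟨x, hx⟩ => hx ▸ (f x).2.2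

lemma mval_nonneg (f : C(I, I)) : 0 ≤ mval f :=
  le_csInf (rng_ne f) fun y ⟨x, hx⟩ => hx ▸ (f x).2.1

lemma mval_le_Mval (f : C(I, I)) : mval f ≤ Mval f := (mval_le f 0).trans (le_Mval f 0)

noncomputable def cval (f : C(I, I)) (t : I) : ℝ := (Mval f - mval f) * (t : ℝ) + mval f

lemma mval_le_cval (f : C(I, I)) (t : I) : mval f ≤ cval f t := by
  have := mul_nonneg (sub_nonneg.2 (mval_le_Mval f)) t.2.1
  unfold cval; linarith

lemma cval_le_Mval (f : C(I, I)) (t : I) : cval f t ≤ Mval f := by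
  have h1 : (Mval f - mval f) * (t : ℝ) ≤ (Mval f - mval f) * 1 :=
    mul_le_mul_of_nonneg_left t.2.2 (sub_nonneg.2 (mval_le_Mval f))
  unfold cval; linarith

lemma cval_mem (f : C(I, I)) (t : I) : cval f t ∈ I :=
  ⟨(mval_nonneg f).trans (mval_le_cval f t), (cval_le_Mval f t).trans (Mval_le_one f)⟩

noncomputable def Hmap (f : C(I, I)) (t : I) : C(I, I) where
  toFun x := ⟨max (f x : ℝ) (cval f t),
    ⟨le_trans (f x).2.1 (le_max_left _ _),
      max_le (f x).2.2 ((cval_le_Mval f t).trans (Mval_le_one f))⟩⟩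
  continuous_toFun :=
    Continuous.subtype_mk ((continuous_subtype_val.comp f.continuous).max continuous_const) _

lemma dist_coe (a b : I) : dist a b = |(a : ℝ) - (b : ℝ)| := by
  rw [Subtype.dist_eq, Real.dist_eq]

lemma Mval_le_add (f g : C(I, I)) : Mval f ≤ Mval g + dist f g := by
  apply csSup_le (rng_ne f)
  rintro y ⟨x, rfl⟩
  have h1 : dist (f x) (g x) ≤ dist f g := ContinuousMap.dist_apply_le_dist x
  rw [dist_coe] at h1
  have h2 := le_Mval g x
  have h3 := abs_le.1 h1
  linarith [h3.1, h3.2]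

lemma mval_le_add (f g : C(I, I)) : mval f ≤ mval g + dist f g := by
  rw [← sub_le_iff_le_add]
  apply le_csInf (rng_ne g)
  rintro y ⟨x, rfl⟩
  have h1 : dist (f x) (g x) ≤ dist f g := ContinuousMap.dist_apply_le_dist x
  rw [dist_coe] at h1
  have h2 := mval_le f x
  have := abs_le.1 h1
  linarith [this.1]

lemma continuous_Mval : Continuous Mval := by
  apply LipschitzWith.continuous (K := 1)
  apply LipschitzWith.of_dist_le_mul
  intro f g
  rw [NNReal.coe_one, one_mul, Real.dist_eq, abs_sub_le_iff]
  constructor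
  · linarith [Mval_le_add f g]
  · rw [dist_comm]; linarith [Mval_le_add g f]

lemma continuous_mval : Continuous mval := by
  apply LipschitzWith.continuous (K := 1)
  apply LipschitzWith.of_dist_le_mul
  intro f g
  rw [NNReal.coe_one, one_mul, Real.dist_eq, abs_sub_le_iff]
  constructor
  · linarith [mval_le_add f g]
  · rw [dist_comm]; linarith [mval_le_add g f]

lemma continuous_Hmap : Continuous fun p : C(I, I) × I => Hmap p.1 p.2 := by
  apply ContinuousMap.continuous_of_continuous_uncurry
  unfold Function.uncurry
  apply Continuous.subtype_mk
  apply Continuous.max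
  · exact continuous_subtype_val.comp
      (continuous_eval.comp
        ((continuous_fst.comp continuous_fst).prodMk continuous_snd))
  · have hM : Continuous fun p : (C(I, I) × I) × I => Mval p.1.1 :=
      continuous_Mval.comp (continuous_fst.comp continuous_fst)
    have hm : Continuous fun p : (C(I, I) × I) × I => mval p.1.1 :=
      continuous_mval.comp (continuous_fst.comp continuous_fst)
    have ht : Continuous fun p : (C(I, I) × I) × I => (p.1.2 : ℝ) :=
      continuous_subtype_val.comp (continuous_snd.comp continuous_fst)
    exact ((hM.sub hm).mul ht).add hm

end HAux

/-- The homotopy `H²(f,t)(x) = max {f(x), (M(f) - m(f)) t + m(f)}` is well defined and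
continuous, satisfies `H²_0 = id`, does not increase topological entropy and preserves
piecewise monotonicity for `t ∈ (0,1]`, and `H²_1(f)` is the constant map `M(f)`. -/
theorem exists_homotopy_H2 :
    ∃ H : C(I, I) × I → C(I, I),
      (∀ (f : C(I, I)) (t x : I),
        ((H (f, t)) x : ℝ) = max (f x : ℝ) ((Mval f - mval f) * (t : ℝ) + mval f)) ∧
      Continuous H ∧
      (∀ f : C(I, I), H (f, 0) = f) ∧
      (∀ (f : C(I, I)) (t : I), 0 < t →
        htop (H (f, t)) ≤ htop f ∧
          (PiecewiseMonotone ⇑f → PiecewiseMonotone ⇑(H (f, t)))) ∧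
      (∀ (f : C(I, I)) (x : I), ((H (f, 1)) x : ℝ) = Mval f) := by
  classical
  refine ⟨fun p => HAux.Hmap p.1 p.2, ?_, HAux.continuous_Hmap, ?_, ?_, ?_⟩
  · intro f t x
    rfl
  · intro f
    apply ContinuousMap.ext
    intro x
    apply Subtype.ext
    show max ((f x : ℝ)) (HAux.cval f 0) = (f x : ℝ)
    have h0 : HAux.cval f 0 = mval f := by simp [HAux.cval]
    rw [h0, max_eq_left (HAux.mval_le f x)]
  · intro f t _ht
    constructor
    · unfold htop
      apply TruncAux.coverEntropy_le (c := (⟨HAux.cval f t, HAux.cval_mem f t⟩ : I))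
      intro x
      rcases max_choice ((f x : ℝ)) (HAux.cval f t) with h | h
      · exact Or.inl (Subtype.ext h)
      · exact Or.inr (Subtype.ext h)
    · rintro ⟨n, tt, h0, h1, hsm, hm⟩
      refine ⟨n, tt, h0, h1, hsm, fun i => ?_⟩
      rcases hm i with h | h
      · left
        intro x hx y hy hxy
        exact Subtype.coe_le_coe.1
          (max_le_max (Subtype.coe_le_coe.2 (h hx hy hxy)) le_rfl)
      · right
        intro x hx y hy hxy
        exact Subtype.coe_le_coe.1
          (max_le_max (Subtype.coe_le_coe.2 (h hx hy hxy)) le_rfl)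
  · intro f x
    show max ((f x : ℝ)) (HAux.cval f 1) = Mval f
    have h1 : HAux.cval f 1 = Mval f := by simp [HAux.cval]
    rw [h1, max_eq_right (HAux.le_Mval f x)]
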